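/- arXiv:1301.7308 — 2 statements merged into one kernel-verified Lean document; each statement's English description precedes it below -/
import Mathlib

section
/- Let R be an associative unital ring and let 0 → A → B → C → 0 be a short exact sequence of finitely generated projective right R-modules (i.e. i : A → B is injective, p : B → C is surjective, and the image of i equals the kernel of p). Let f_A : A → A, f_B : B → B, f_C : C → C be R-module endomorphisms with i ∘ f_A = f_B ∘ i and p ∘ f_B = f_C ∘ p. Then trace(f_B) = trace(f_A) + trace(f_C) in R^ab. -/
open MulOpposite TensorProduct

section HattoriStallings

variable (R : Type*) [Ring R] (P : Type*) [AddCommGroup P] [Module Rᵐᵒᵖ P]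

/-- For `x : P` and `ξ` in the dual module, the endomorphism `y ↦ x · ξ(y)` of the
right `R`-module `P`. -/
def endOf (x : P) (ξ : P →ₗ[Rᵐᵒᵖ] R) : P →ₗ[Rᵐᵒᵖ] P where
  toFun y := op (ξ y) • x
  map_add' y z := by simp [map_add, op_add, add_smul]
  map_smul' r y := by
    simp only [map_smul, RingHom.id_apply]
    show op ((ξ y) * r.unop) • x = r • op (ξ y) • x
    rw [op_mul, op_unop, mul_smul]

/-- The bilinear (over `ℤ`) map underlying `θ`. -/
def thetaHom : P →+ (P →ₗ[Rᵐᵒᵖ] R) →+ (P →ₗ[Rᵐᵒᵖ] P) where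
  toFun x :=
    { toFun := fun ξ => endOf R P x ξ
      map_zero' := by ext y; simp [endOf]
      map_add' := by intro ξ η; ext y; simp [endOf, op_add, add_smul] }
  map_zero' := by ext ξ y; simp [endOf]
  map_add' := by intro x z; ext ξ y; simp [endOf]

/-- `θ` on the level of `P ⊗_ℤ DP`. -/
noncomputable def theta0 : TensorProduct ℤ P (P →ₗ[Rᵐᵒᵖ] R) →+ (P →ₗ[Rᵐᵒᵖ] P) :=
  TensorProduct.liftAddHom (thetaHom R P) (by
    intro n x ξ
    ext y
    show op (ξ y) • (n • x) = op ((n • ξ) y) • x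
    rw [LinearMap.smul_apply, op_smul, smul_assoc, smul_comm])

@[simp] lemma theta0_tmul (x : P) (ξ : P →ₗ[Rᵐᵒᵖ] R) (y : P) :
    theta0 R P (x ⊗ₜ[ℤ] ξ) y = op (ξ y) • x := rfl

/-- The additive subgroup of `P ⊗_ℤ DP` generated by the balancing relations
`(x·r) ⊗ ξ - x ⊗ (r·ξ)`; the quotient by it is the tensor product `P ⊗_R DP`
of the right module `P` with the left module `DP` over `R`. -/
noncomputable def relSub : AddSubgroup (TensorProduct ℤ P (P →ₗ[Rᵐᵒᵖ] R)) :=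
  AddSubgroup.closure
    { z | ∃ (x : P) (r : R) (ξ : P →ₗ[Rᵐᵒᵖ] R), z = (op r • x) ⊗ₜ[ℤ] ξ - x ⊗ₜ[ℤ] (r • ξ) }

/-- The tensor product `P ⊗_R DP` of the right `R`-module `P` with its dual (a left
`R`-module), as an abelian group. -/
abbrev TensorDual := TensorProduct ℤ P (P →ₗ[Rᵐᵒᵖ] R) ⧸ relSub R P

lemma relSub_le_ker : relSub R P ≤ (theta0 R P).ker := by
  rw [relSub, AddSubgroup.closure_le]
  rintro z ⟨x, r, ξ, rfl⟩
  simp only [SetLike.mem_coe, AddMonoidHom.mem_ker, map_sub]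
  rw [sub_eq_zero]
  ext y
  simp only [theta0_tmul]
  rw [smul_smul]
  show (op (ξ y) * op r) • x = op ((r • ξ) y) • x
  rw [← op_mul]
  rfl

/-- The canonical additive map `θ : P ⊗_R DP → Hom_R(P, P)`, determined by
`θ(x ⊗ ξ)(y) = x · ξ(y)`. -/
noncomputable def theta : TensorDual R P →+ (P →ₗ[Rᵐᵒᵖ] P) :=
  QuotientAddGroup.lift (relSub R P) (theta0 R P) (fun _ hz => relSub_le_ker R P hz)

@[simp] lemma theta_mk (z : TensorProduct ℤ P (P →ₗ[Rᵐᵒᵖ] R)) :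
    theta R P (QuotientAddGroup.mk z) = theta0 R P z := rfl

end HattoriStallings

section Abelianization

variable (R : Type*) [Ring R]

/-- The additive subgroup of a ring generated by all commutators `a*b - b*a`. -/
def commSub : AddSubgroup R :=
  AddSubgroup.closure { z | ∃ a b : R, z = a * b - b * a }

/-- The abelianization `R^ab` of the ring `R` (as an abelian group). -/
abbrev RingAb := R ⧸ commSub R

/-- The canonical projection `π : R → R^ab`. -/
def piAb : R →+ RingAb R := QuotientAddGroup.mk' (commSub R)

lemma piAb_comm (a b : R) : piAb R (a * b) = piAb R (b * a) := by
  rw [← sub_eq_zero, ← map_sub]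
  exact (QuotientAddGroup.eq_zero_iff _).mpr (AddSubgroup.subset_closure ⟨a, b, rfl⟩)

end Abelianization

section Trace

variable (R : Type*) [Ring R] (P : Type*) [AddCommGroup P] [Module Rᵐᵒᵖ P]

/-- The evaluation map `P ⊗_ℤ DP → R`, `x ⊗ ξ ↦ ξ(x)`. -/
noncomputable def eps0 : TensorProduct ℤ P (P →ₗ[Rᵐᵒᵖ] R) →+ R :=
  TensorProduct.liftAddHom
    { toFun := fun x =>
        { toFun := fun ξ => ξ x
          map_zero' := rfl
          map_add' := fun _ _ => rfl }
      map_zero' := by ext ξ; simp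
      map_add' := by intro x y; ext ξ; simp }
    (by intro n x ξ; simp)

lemma relSub_le_ker_eps : relSub R P ≤ ((piAb R).comp (eps0 R P)).ker := by
  rw [relSub, AddSubgroup.closure_le]
  rintro z ⟨x, r, ξ, rfl⟩
  simp only [SetLike.mem_coe, AddMonoidHom.mem_ker, map_sub, AddMonoidHom.coe_comp,
    Function.comp_apply]
  rw [sub_eq_zero]
  show piAb R (eps0 R P ((op r • x) ⊗ₜ[ℤ] ξ)) = piAb R (eps0 R P (x ⊗ₜ[ℤ] (r • ξ)))
  show piAb R (ξ (op r • x)) = piAb R ((r • ξ) x)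
  rw [map_smul]
  show piAb R (ξ x * r) = piAb R (r * ξ x)
  exact piAb_comm R (ξ x) r

/-- The evaluation map `ε : P ⊗_R DP → R^ab` (well defined after composing with `π`). -/
noncomputable def epsAb : TensorDual R P →+ RingAb R :=
  QuotientAddGroup.lift (relSub R P) ((piAb R).comp (eps0 R P))
    (fun _ hz => relSub_le_ker_eps R P hz)

/-- The Hattori–Stallings trace of an endomorphism `f` of the right `R`-module `P`:
`trace f = π(ε(θ⁻¹ f))`.  (For `P` finitely generated projective, `θ` is bijective, so
`Function.invFun (theta R P)` is the genuine inverse of `θ`.) -/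
noncomputable def hstrace (f : P →ₗ[Rᵐᵒᵖ] P) : RingAb R :=
  epsAb R P (Function.invFun (theta R P) f)

end Trace

section TraceFormula

variable (R : Type*) [Ring R] (P : Type*) [AddCommGroup P] [Module Rᵐᵒᵖ P]

/-- `unop` as an `Rᵐᵒᵖ`-linear map. -/
def unopHom : Rᵐᵒᵖ →ₗ[Rᵐᵒᵖ] R where
  toFun := unop
  map_add' _ _ := rfl
  map_smul' _ _ := rfl

/-- Every finitely generated projective right module has a finite dual basis. -/
lemma exists_dual_basis [Module.Finite Rᵐᵒᵖ P] [Module.Projective Rᵐᵒᵖ P] :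
    ∃ (n : ℕ) (x : Fin n → P) (ξ : Fin n → (P →ₗ[Rᵐᵒᵖ] R)),
      ∀ y : P, ∑ i, op (ξ i y) • x i = y := by
  obtain ⟨n, π, hπ⟩ := Module.Finite.exists_fin' Rᵐᵒᵖ P
  obtain ⟨σ, hσ⟩ := Module.projective_lifting_property π LinearMap.id hπ
  refine ⟨n, fun i => π (Pi.single i 1),
    fun i => (unopHom R) ∘ₗ (LinearMap.proj i) ∘ₗ σ, fun y => ?_⟩
  have key : ∀ i : Fin n,
      op (((unopHom R) ∘ₗ (LinearMap.proj i) ∘ₗ σ) y) • π (Pi.single i (1 : Rᵐᵒᵖ))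
        = π (Pi.single i (σ y i)) := by
    intro i
    show op (unop (σ y i)) • π (Pi.single i 1) = π (Pi.single i (σ y i))
    rw [op_unop, ← map_smul]
    congr 1
    funext j
    by_cases h : j = i
    · subst h; simp [Pi.single_eq_same]
    · simp [Pi.single_eq_of_ne h]
  rw [Finset.sum_congr rfl (fun i _ => key i), ← map_sum, Finset.univ_sum_single]
  exact DFunLike.congr_fun hσ y

variable {R P}

lemma mk_rel (x : P) (r : R) (ξ : P →ₗ[Rᵐᵒᵖ] R) :
    (QuotientAddGroup.mk ((op r • x) ⊗ₜ[ℤ] ξ) : TensorDual R P)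
      = QuotientAddGroup.mk (x ⊗ₜ[ℤ] (r • ξ)) := by
  rw [QuotientAddGroup.eq_iff_sub_mem]
  exact AddSubgroup.subset_closure ⟨x, r, ξ, rfl⟩

/-- A left inverse of `θ` built from a dual basis. -/
noncomputable def psi {ι : Type*} [Fintype ι] (x : ι → P) (ξ : ι → (P →ₗ[Rᵐᵒᵖ] R)) :
    (P →ₗ[Rᵐᵒᵖ] P) →+ TensorDual R P where
  toFun f := ∑ i, QuotientAddGroup.mk ((x i) ⊗ₜ[ℤ] (ξ i ∘ₗ f))
  map_zero' := by simp [LinearMap.comp_zero]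
  map_add' f g := by
    simp only [LinearMap.comp_add, TensorProduct.tmul_add]
    rw [← Finset.sum_add_distrib]
    rfl

lemma psi_theta0 {ι : Type*} [Fintype ι] (x : ι → P) (ξ : ι → (P →ₗ[Rᵐᵒᵖ] R))
    (hdb : ∀ y : P, ∑ i, op (ξ i y) • x i = y)
    (z : TensorProduct ℤ P (P →ₗ[Rᵐᵒᵖ] R)) :
    psi x ξ (theta0 R P z) = QuotientAddGroup.mk z := by
  induction z using TensorProduct.induction_on with
  | zero => simp
  | tmul y η =>
    have h1 : ∀ i, ξ i ∘ₗ theta0 R P (y ⊗ₜ[ℤ] η) = (ξ i y) • η := by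
      intro i; ext w
      show ξ i (op (η w) • y) = ξ i y * η w
      rw [map_smul, op_smul_eq_mul]
    show ∑ i, (QuotientAddGroup.mk ((x i) ⊗ₜ[ℤ] (ξ i ∘ₗ theta0 R P (y ⊗ₜ[ℤ] η))) :
        TensorDual R P) = _
    calc ∑ i, (QuotientAddGroup.mk ((x i) ⊗ₜ[ℤ] (ξ i ∘ₗ theta0 R P (y ⊗ₜ[ℤ] η))) :
            TensorDual R P)
        = ∑ i, QuotientAddGroup.mk ((op (ξ i y) • x i) ⊗ₜ[ℤ] η) := by
          refine Finset.sum_congr rfl fun i _ => ?_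
          rw [h1 i, mk_rel]
      _ = QuotientAddGroup.mk' (relSub R P) (∑ i, (op (ξ i y) • x i) ⊗ₜ[ℤ] η) := by
          rw [map_sum]; rfl
      _ = QuotientAddGroup.mk (y ⊗ₜ[ℤ] η) := by
          rw [← TensorProduct.sum_tmul, hdb y]; rfl
  | add a b ha hb =>
    rw [map_add, map_add]
    show (psi x ξ) _ + (psi x ξ) _ = _
    rw [ha, hb]; rfl

lemma psi_theta {ι : Type*} [Fintype ι] (x : ι → P) (ξ : ι → (P →ₗ[Rᵐᵒᵖ] R))
    (hdb : ∀ y : P, ∑ i, op (ξ i y) • x i = y) :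
    Function.LeftInverse (psi x ξ) (theta R P) := fun z =>
  QuotientAddGroup.induction_on z (fun t => psi_theta0 x ξ hdb t)

lemma theta_elem {ι : Type*} [Fintype ι] (x : ι → P) (ξ : ι → (P →ₗ[Rᵐᵒᵖ] R))
    (hdb : ∀ y : P, ∑ i, op (ξ i y) • x i = y) (f : P →ₗ[Rᵐᵒᵖ] P) :
    theta R P (QuotientAddGroup.mk (∑ i, f (x i) ⊗ₜ[ℤ] ξ i)) = f := by
  ext y
  rw [theta_mk, map_sum, LinearMap.sum_apply]
  simp_rw [theta0_tmul, ← map_smul, ← map_sum, hdb]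

lemma hstrace_eq {ι : Type*} [Fintype ι] (x : ι → P) (ξ : ι → (P →ₗ[Rᵐᵒᵖ] R))
    (hdb : ∀ y : P, ∑ i, op (ξ i y) • x i = y) (f : P →ₗ[Rᵐᵒᵖ] P) :
    hstrace R P f = piAb R (∑ i, ξ i (f (x i))) := by
  have hinj : Function.Injective (theta R P) := (psi_theta x ξ hdb).injective
  have h1 : Function.invFun (theta R P) f
      = QuotientAddGroup.mk (∑ i, f (x i) ⊗ₜ[ℤ] ξ i) := by
    conv_lhs => rw [← theta_elem x ξ hdb f]
    exact Function.leftInverse_invFun hinj _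
  rw [hstrace, h1]
  show ((piAb R).comp (eps0 R P)) (∑ i, f (x i) ⊗ₜ[ℤ] ξ i) = _
  rw [AddMonoidHom.comp_apply, map_sum]
  rfl

end TraceFormula

/-- If `0 → A → B → C → 0` is a short exact sequence of finitely
generated projective right `R`-modules and `f_A`, `f_B`, `f_C` are endomorphisms
commuting with the maps of the sequence, then `trace(f_B) = trace(f_A) + trace(f_C)`
in `R^ab`. -/
theorem hstrace_additive (R : Type*) [Ring R]
    (A : Type*) [AddCommGroup A] [Module Rᵐᵒᵖ A]
    [Module.Finite Rᵐᵒᵖ A] [Module.Projective Rᵐᵒᵖ A]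
    (B : Type*) [AddCommGroup B] [Module Rᵐᵒᵖ B]
    [Module.Finite Rᵐᵒᵖ B] [Module.Projective Rᵐᵒᵖ B]
    (C : Type*) [AddCommGroup C] [Module Rᵐᵒᵖ C]
    [Module.Finite Rᵐᵒᵖ C] [Module.Projective Rᵐᵒᵖ C]
    (i : A →ₗ[Rᵐᵒᵖ] B) (p : B →ₗ[Rᵐᵒᵖ] C)
    (hi : Function.Injective i) (hp : Function.Surjective p)
    (hexact : LinearMap.range i = LinearMap.ker p)
    (fA : A →ₗ[Rᵐᵒᵖ] A) (fB : B →ₗ[Rᵐᵒᵖ] B) (fC : C →ₗ[Rᵐᵒᵖ] C)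
    (hcommi : i ∘ₗ fA = fB ∘ₗ i) (hcommp : p ∘ₗ fB = fC ∘ₗ p) :
    hstrace R B fB = hstrace R A fA + hstrace R C fC := by
  obtain ⟨nA, a, al, hA⟩ := exists_dual_basis R A
  obtain ⟨nC, c, ga, hC⟩ := exists_dual_basis R C
  obtain ⟨s, hs⟩ := Module.projective_lifting_property p LinearMap.id hp
  have hps : ∀ z : C, p (s z) = z := fun z => DFunLike.congr_fun hs z
  have hpi : ∀ x : A, p (i x) = 0 := by
    intro x
    have : i x ∈ LinearMap.ker p := hexact ▸ LinearMap.mem_range_self i x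
    exact this
  have hker : ∀ b : B, b - s (p b) ∈ LinearMap.range i := by
    intro b
    rw [hexact, LinearMap.mem_ker, map_sub, hps, sub_self]
  let e : A ≃ₗ[Rᵐᵒᵖ] LinearMap.range i := LinearEquiv.ofInjective i hi
  let q : B →ₗ[Rᵐᵒᵖ] LinearMap.range i :=
    (LinearMap.id - s ∘ₗ p).codRestrict _ (fun b => hker b)
  let r : B →ₗ[Rᵐᵒᵖ] A := (e.symm : LinearMap.range i →ₗ[Rᵐᵒᵖ] A) ∘ₗ q
  have hir : ∀ b : B, i (r b) = b - s (p b) := by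
    intro b
    have h2 : ((e (e.symm (q b)) : LinearMap.range i) : B) = ((q b : LinearMap.range i) : B) := by
      rw [e.apply_symm_apply]
    rw [LinearEquiv.ofInjective_apply] at h2
    exact h2
  have hri : ∀ x : A, r (i x) = x := by
    intro x
    apply hi
    rw [hir, hpi, map_zero, sub_zero]
  -- dual basis for B
  set xB : Fin nA ⊕ Fin nC → B := Sum.elim (fun j => i (a j)) (fun k => s (c k)) with hxB
  set xiB : Fin nA ⊕ Fin nC → (B →ₗ[Rᵐᵒᵖ] R) :=
    Sum.elim (fun j => al j ∘ₗ r) (fun k => ga k ∘ₗ p) with hxiB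
  have hdbB : ∀ y : B, ∑ m, op (xiB m y) • xB m = y := by
    intro y
    rw [Fintype.sum_sum_type]
    have h1 : ∑ j, op (xiB (Sum.inl j) y) • xB (Sum.inl j) = i (r y) := by
      simp only [hxB, hxiB, Sum.elim_inl, LinearMap.comp_apply]
      simp_rw [← map_smul, ← map_sum, hA]
    have h2 : ∑ k, op (xiB (Sum.inr k) y) • xB (Sum.inr k) = s (p y) := by
      simp only [hxB, hxiB, Sum.elim_inr, LinearMap.comp_apply]
      simp_rw [← map_smul, ← map_sum, hC]
    rw [h1, h2, hir, sub_add_cancel]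
  rw [hstrace_eq xB xiB hdbB fB, hstrace_eq a al hA fA, hstrace_eq c ga hC fC, ← map_add]
  congr 1
  rw [Fintype.sum_sum_type]
  congr 1
  · refine Finset.sum_congr rfl fun j _ => ?_
    simp only [hxB, hxiB, Sum.elim_inl, LinearMap.comp_apply]
    have : fB (i (a j)) = i (fA (a j)) := (DFunLike.congr_fun hcommi (a j)).symm
    rw [this, hri]
  · refine Finset.sum_congr rfl fun k _ => ?_
    simp only [hxB, hxiB, Sum.elim_inr, LinearMap.comp_apply]
    have : p (fB (s (c k))) = fC (p (s (c k))) := DFunLike.congr_fun hcommp (s (c k))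
    rw [this, hps]
end

section
/- Let S¹ = { z ∈ ℂ : |z| = 1 } and let σ : S¹ → S¹ be the reflection σ(z) = −conj(z). For every continuous map f : [−1, 1] → [−1, 1] with f(−1) = −1 and f(1) = 1, there exists a continuous map F : S¹ → S¹ such that F(σ(z)) = σ(F(z)) for all z ∈ S¹ and Im(F(z)) = f(Im(z)) for all z ∈ S¹; that is, every continuous self-map of [−1,1] fixing the endpoints lifts to a σ-equivariant self-map of the circle inducing f on the quotient. -/
/-- The unit circle `S¹ = { z ∈ ℂ : |z| = 1 }`, with the subspace topology. -/
def UnitCircle : Type := { z : ℂ // ‖z‖ = 1 }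

noncomputable instance : TopologicalSpace UnitCircle :=
  instTopologicalSpaceSubtype

/-- The reflection of `S¹` at the imaginary axis, `σ(z) = -conj(z)`. -/
noncomputable def circleReflection (z : UnitCircle) : UnitCircle :=
  ⟨-(starRingEnd ℂ) z.1, by rw [norm_neg, Complex.norm_conj]; exact z.2⟩

/-- The map `S¹ → [-1, 1]` taking imaginary parts. -/
noncomputable def imMap (z : UnitCircle) : Set.Icc (-1 : ℝ) 1 :=
  ⟨z.1.im, by
    constructor
    · have h := Complex.abs_im_le_norm z.1
      rw [z.2] at h
      linarith [neg_abs_le z.1.im, abs_nonneg z.1.im]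
    · have h := Complex.abs_im_le_norm z.1
      rw [z.2] at h
      linarith [le_abs_self z.1.im]⟩

/-!
Take `F(z) = ±√(1 - f(Im z)²) + f(Im z)·i`, with the sign of `Re z`. This is equivariant
because `σ` flips the sign of `Re z` and fixes `Im z`. It is continuous across the imaginary
axis because there `Im z = ±1`, so `f(Im z) = ±1` and the real part of `F` vanishes.
-/

open Complex

theorem Continuous.ite_nonpos_neg {X : Type*} [TopologicalSpace X] {u g : X → ℝ}
    (hu : Continuous u) (hg : Continuous g) (hzero : ∀ x, u x = 0 → g x = 0) :
    Continuous fun x => if u x ≤ 0 then -g x else g x :=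
  hg.neg.if_le hg hu continuous_const fun x hx => by simp [hzero x hx]

noncomputable def halfCirclePoint (x : ℝ) (y : Set.Icc (-1 : ℝ) 1) : UnitCircle :=
  ⟨((if x ≤ 0 then -√(1 - (y : ℝ) ^ 2) else √(1 - (y : ℝ) ^ 2) : ℝ) : ℂ) + (y : ℝ) * I, by
    have hy : 0 ≤ 1 - (y : ℝ) ^ 2 := by nlinarith [y.2.1, y.2.2]
    rw [norm_add_mul_I]
    split_ifs <;> simp [Real.sq_sqrt hy]⟩

theorem imMap_halfCirclePoint (x : ℝ) (y : Set.Icc (-1 : ℝ) 1) :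
    imMap (halfCirclePoint x y) = y :=
  Subtype.ext (by simp [imMap, halfCirclePoint])

theorem circleReflection_halfCirclePoint {x : ℝ} {y : Set.Icc (-1 : ℝ) 1}
    (h : x = 0 → (y : ℝ) ^ 2 = 1) :
    circleReflection (halfCirclePoint x y) = halfCirclePoint (-x) y := by
  apply Subtype.ext
  rcases lt_trichotomy x 0 with hx | rfl | hx
  · simp [circleReflection, halfCirclePoint, hx.le, not_le.2 (neg_pos.2 hx), add_comm]
  · simp [circleReflection, halfCirclePoint, h rfl]
  · simp [circleReflection, halfCirclePoint, not_le.2 hx, hx.le, add_comm]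

theorem Continuous.halfCirclePoint {X : Type*} [TopologicalSpace X] {u : X → ℝ}
    {v : X → Set.Icc (-1 : ℝ) 1} (hu : Continuous u) (hv : Continuous v)
    (h : ∀ x, u x = 0 → (v x : ℝ) ^ 2 = 1) :
    Continuous fun x => _root_.halfCirclePoint (u x) (v x) := by
  have hv' : Continuous fun x => (v x : ℝ) := continuous_subtype_val.comp hv
  refine Continuous.subtype_mk (.add (continuous_ofReal.comp ?_)
    ((continuous_ofReal.comp hv').mul continuous_const)) _
  exact hu.ite_nonpos_neg (by fun_prop) fun x hx => by simp [h x hx]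

theorem continuous_imMap : Continuous imMap :=
  (continuous_im.comp continuous_subtype_val).subtype_mk _

theorem re_circleReflection (z : UnitCircle) : (circleReflection z).1.re = -z.1.re := by
  simp [circleReflection]

theorem imMap_circleReflection (z : UnitCircle) : imMap (circleReflection z) = imMap z :=
  Subtype.ext (by simp [imMap, circleReflection])

theorem imMap_eq_neg_one_or_one_of_re_eq_zero {z : UnitCircle} (hz : z.1.re = 0) :
    imMap z = ⟨-1, by norm_num⟩ ∨ imMap z = ⟨1, by norm_num⟩ := by
  have him : z.1.im ^ 2 = 1 := by
    have := z.2
    rw [← Complex.re_add_im z.1, norm_add_mul_I, hz, Real.sqrt_eq_one] at this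
    simpa using this
  rcases sq_eq_one_iff.1 him with h | h
  · exact .inr (Subtype.ext h)
  · exact .inl (Subtype.ext h)

/-- Every continuous map `f : [-1, 1] → [-1, 1]` with `f(-1) = -1` and
`f(1) = 1` lifts to a continuous `σ`-equivariant self-map `F` of the circle `S¹` inducing
`f` on the quotient, i.e. `F(σ(z)) = σ(F(z))` and `Im(F(z)) = f(Im(z))` for all `z`. -/
theorem equivariant_lift_of_interval_map
    (f : Set.Icc (-1 : ℝ) 1 → Set.Icc (-1 : ℝ) 1) (hf : Continuous f)
    (hneg : f ⟨-1, by norm_num⟩ = ⟨-1, by norm_num⟩)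
    (hpos : f ⟨1, by norm_num⟩ = ⟨1, by norm_num⟩) :
    ∃ F : UnitCircle → UnitCircle,
      Continuous F ∧
      (∀ z : UnitCircle, F (circleReflection z) = circleReflection (F z)) ∧
      (∀ z : UnitCircle, imMap (F z) = f (imMap z)) := by
  have hpoles : ∀ z : UnitCircle, z.1.re = 0 → (f (imMap z) : ℝ) ^ 2 = 1 := fun z hz => by
    rcases imMap_eq_neg_one_or_one_of_re_eq_zero hz with h | h <;> simp [h, hneg, hpos]
  refine ⟨fun z => halfCirclePoint z.1.re (f (imMap z)),
    (continuous_re.comp continuous_subtype_val).halfCirclePoint (hf.comp continuous_imMap) hpoles,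
    fun z => ?_, fun z => imMap_halfCirclePoint _ _⟩
  dsimp only
  rw [circleReflection_halfCirclePoint (hpoles z), re_circleReflection, imMap_circleReflection]
end
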